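/- arXiv:0902.4508 — 3 statements merged into one kernel-verified Lean document; each statement's English description precedes it below -/
import Mathlib

section
/- Suppose d' = d. Then for every pair (α,β) ∈ F_{p^m} × F_q with (α,β) ≠ (0,0), the number of zeros in F_q of the F_{p^d}-linear map φ_{α,β}(x) = α x^{p^m} + β x^{p^k} + β^{p^{n−k}} x^{p^{n−k}} is 1, p^d, or p^{2d} (equivalently, the rank of the associated quadratic form x ↦ Tr^m_d(α x^{p^m+1}) + Tr^n_d(β x^{p^k+1}) over F_{p^d} is s, s−1, or s−2). -/
open scoped BigOperators Classical

noncomputable section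

/-- The map `φ_{α,β}(x) = α x^{p^m} + β x^{p^k} + β^{p^{n-k}} x^{p^{n-k}}`. -/
def phiMap (p m n k : ℕ) {F : Type} [Field F] (α β x : F) : F :=
  α * x ^ p ^ m + β * x ^ p ^ k + β ^ p ^ (n - k) * x ^ p ^ (n - k)

/-- The trace-type sum `x ↦ ∑_{i<r} x^{p^{t i}}`; for `x` in the subfield of size
`p^{t·r}` this is the relative trace down to the subfield of size `p^t`. -/
def trSum (p t r : ℕ) {F : Type} [Field F] (x : F) : F :=
  ∑ i ∈ Finset.range r, x ^ p ^ (t * i)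

/-- `ζ_p^c = exp(2πi·c̃/p)` for a lift `c̃` of `c : F_p`. -/
noncomputable def expChar (p : ℕ) (c : ZMod p) : ℂ :=
  Complex.exp (2 * Real.pi * Complex.I * (c.val : ℂ) / (p : ℂ))

/-- Identify an element of the prime field of `F` with an element of `ZMod p`
(the partial inverse of the algebra map). -/
noncomputable def fToZMod (p : ℕ) {F : Type} [Field F] [Algebra (ZMod p) F] (x : F) : ZMod p :=
  letI : Nonempty (ZMod p) := ⟨0⟩
  Function.invFun (algebraMap (ZMod p) F) x

/-- `T(α,β) = ∑_{x ∈ F_q} ζ_p^{Tr^m_1(α x^{p^m+1}) + Tr^n_1(β x^{p^k+1})}`. -/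
noncomputable def Tsum (p m n k : ℕ) (F : Type) [Field F] [Fintype F] [Algebra (ZMod p) F]
    (α β : F) : ℂ :=
  ∑ x : F, expChar p (fToZMod p (trSum p 1 m (α * x ^ (p ^ m + 1))) +
      fToZMod p (trSum p 1 n (β * x ^ (p ^ k + 1))))

/-- `S(α,β,γ) = ∑_{x ∈ F_q} ζ_p^{Tr^m_1(α x^{p^m+1}) + Tr^n_1(β x^{p^k+1} + γ x)}`. -/
noncomputable def Ssum (p m n k : ℕ) (F : Type) [Field F] [Fintype F] [Algebra (ZMod p) F]
    (α β γ : F) : ℂ :=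
  ∑ x : F, expChar p (fToZMod p (trSum p 1 m (α * x ^ (p ^ m + 1))) +
      fToZMod p (trSum p 1 n (β * x ^ (p ^ k + 1) + γ * x)))

/-- `√(q₀*)` where `q₀* = (−1)^{(q₀−1)/2} q₀`. -/
noncomputable def sqrtStar (q0 : ℕ) : ℂ :=
  if q0 % 4 = 1 then (Real.sqrt q0 : ℂ) else Complex.I * (Real.sqrt q0 : ℂ)

/-- `ζ_p = exp(2πi/p)`. -/
noncomputable def zetaC (p : ℕ) : ℂ := Complex.exp (2 * Real.pi * Complex.I / (p : ℂ))

/-- Number of pairs `(α,β) ∈ F_{p^m} × F_q` with `T(α,β) = v`. -/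
noncomputable def Tcount (p m n k : ℕ) (F : Type) [Field F] [Fintype F] [Algebra (ZMod p) F]
    (v : ℂ) : ℕ :=
  Nat.card {ab : F × F // ab.1 ^ p ^ m = ab.1 ∧ Tsum p m n k F ab.1 ab.2 = v}

/-- Number of triples `(α,β,γ) ∈ F_{p^m} × F_q × F_q` with `S(α,β,γ) = v`. -/
noncomputable def Scount (p m n k : ℕ) (F : Type) [Field F] [Fintype F] [Algebra (ZMod p) F]
    (v : ℂ) : ℕ :=
  Nat.card {abc : F × F × F // abc.1 ^ p ^ m = abc.1 ∧ Ssum p m n k F abc.1 abc.2.1 abc.2.2 = v}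

/-- Hamming weight of the codeword of `C₁` attached to `(α,β)`:
the number of `0 ≤ i ≤ q-2` with `Tr^m_t(α π^{i(p^m+1)}) + Tr^n_t(β π^{i(p^k+1)}) ≠ 0`. -/
noncomputable def wt1 (p m n k t : ℕ) {F : Type} [Field F] (π α β : F) : ℕ :=
  Nat.card {i : ℕ // i ≤ p ^ n - 2 ∧
    trSum p t (m / t) (α * π ^ (i * (p ^ m + 1))) +
    trSum p t (n / t) (β * π ^ (i * (p ^ k + 1))) ≠ 0}

/-- Number of pairs `(α,β) ∈ F_{p^m} × F_q` whose `C₁`-codeword has weight `v`. -/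
noncomputable def wt1count (p m n k t : ℕ) (F : Type) [Field F] [Fintype F] (π : F) (v : ℕ) : ℕ :=
  Nat.card {ab : F × F // ab.1 ^ p ^ m = ab.1 ∧ wt1 p m n k t π ab.1 ab.2 = v}

/-- Hamming weight of the codeword of `C₂` attached to `(α,β,γ)`. -/
noncomputable def wt2 (p m n k t : ℕ) {F : Type} [Field F] (π α β γ : F) : ℕ :=
  Nat.card {i : ℕ // i ≤ p ^ n - 2 ∧
    trSum p t (m / t) (α * π ^ (i * (p ^ m + 1))) +
    trSum p t (n / t) (β * π ^ (i * (p ^ k + 1)) + γ * π ^ i) ≠ 0}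

/-- Number of triples `(α,β,γ)` whose `C₂`-codeword has weight `v`. -/
noncomputable def wt2count (p m n k t : ℕ) (F : Type) [Field F] [Fintype F] (π : F) (v : ℕ) : ℕ :=
  Nat.card {abc : F × F × F // abc.1 ^ p ^ m = abc.1 ∧ wt2 p m n k t π abc.1 abc.2.1 abc.2.2 = v}

/-! The zero set `K` of `φ_{α,β}` is a vector space over `E = 𝔽_{p^d}`, so it suffices to
show `dim_E K ≤ 2`. Raising `φ(y) = 0` to the power `p^k` gives
`L(y) = α^{p^k} y^σ + β^{p^k} y^{p^{2k}} + β y = 0` with `σ = p^{m+k}`, and `σ² = p^{2k}` on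
`𝔽_q`. Fix `x ≠ 0` in `K`. The `E`-linear map `ψ(y) = (y/x)^σ - y/x` on `K` has kernel `E x`,
because the elements of `𝔽_q` fixed by `σ` form `𝔽_{p^gcd(m+k,n)} = 𝔽_{p^{d'}} = E`. Comparing
`L(y)` with `(y/x) L(x)` shows that every `w = ψ(y)` solves `B w^σ = C w` with
`B = β^{p^k} x^{p^{2k}} ≠ 0`; the ratio of two such solutions is fixed by `σ`, so the image of
`ψ` has dimension at most one. -/

open Module Polynomial

theorem pow_pow_eq_self_of_dvd {M : Type*} [Monoid M] {x : M} {p a b : ℕ}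
    (hx : x ^ p ^ a = x) (hab : a ∣ b) : x ^ p ^ b = x := by
  have h : Function.IsPeriodicPt (· ^ p) a x := by
    simpa [Function.IsPeriodicPt, Function.IsFixedPt, pow_iterate] using hx
  simpa [Function.IsPeriodicPt, Function.IsFixedPt, pow_iterate] using h.trans_dvd hab

theorem pow_pow_gcd_eq_self {M : Type*} [Monoid M] {x : M} {p a b : ℕ}
    (ha : x ^ p ^ a = x) (hb : x ^ p ^ b = x) : x ^ p ^ a.gcd b = x := by
  have key (c : ℕ) : Function.IsPeriodicPt (· ^ p) c x ↔ x ^ p ^ c = x := by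
    simp [Function.IsPeriodicPt, Function.IsFixedPt, pow_iterate]
  exact (key _).mp (((key a).mpr ha).gcd ((key b).mpr hb))

theorem Nat.gcd_eq_gcd_of_add_eq_two_mul {a b c : ℕ} (h : b + c = 2 * a) :
    a.gcd b = a.gcd c := by
  have key {b c : ℕ} (h : b + c = 2 * a) : a.gcd b ∣ a.gcd c :=
    Nat.dvd_gcd (Nat.gcd_dvd_left a b) <| (Nat.dvd_add_right (Nat.gcd_dvd_right a b)).mp <|
      h ▸ dvd_mul_of_dvd_right (Nat.gcd_dvd_left a b) 2
  exact Nat.dvd_antisymm (key h) (key (by omega))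

theorem div_pow_eq_div_of_mul_pow_eq_mul {K : Type*} [Field K] {a b v w : K} {q : ℕ}
    (hq : q ≠ 0) (ha : a ≠ 0) (hv : a * v ^ q = b * v) (hw : a * w ^ q = b * w) :
    (v / w) ^ q = v / w := by
  rcases eq_or_ne w 0 with rfl | hw0
  · simp [hq]
  rw [div_pow, div_eq_div_iff (pow_ne_zero _ hw0) hw0]
  apply mul_left_cancel₀ ha
  linear_combination w * hv - v * hw

theorem sub_pow_eq_of_linearized_roots {R : Type*} [CommRing R] {p : ℕ} [ExpChar R p]
    {a b c x u : R} {i j : ℕ} (hu : (u ^ p ^ i) ^ p ^ i = u ^ p ^ j)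
    (hx : a * x ^ p ^ i + b * x ^ p ^ j + c * x = 0)
    (hux : a * (u * x) ^ p ^ i + b * (u * x) ^ p ^ j + c * (u * x) = 0) :
    b * x ^ p ^ j * (u ^ p ^ i - u) ^ p ^ i =
      -(a * x ^ p ^ i + b * x ^ p ^ j) * (u ^ p ^ i - u) := by
  rw [sub_pow_expChar_pow, hu]
  rw [mul_pow, mul_pow] at hux
  linear_combination hux - u * hx

variable {F : Type} [Field F]

theorem phiMap_pow_pow [Fintype F] {p n : ℕ} [ExpChar F p] (hF : Fintype.card F = p ^ n)
    {m k : ℕ} (hk : k ≤ n) (α β y : F) :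
    phiMap p m n k α β y ^ p ^ k =
      α ^ p ^ k * y ^ p ^ (m + k) + β ^ p ^ k * y ^ p ^ (2 * k) + β * y := by
  have hq (z : F) : (z ^ p ^ (n - k)) ^ p ^ k = z := by
    rw [← pow_mul, ← pow_add, Nat.sub_add_cancel hk, ← hF, FiniteField.pow_card]
  simp only [phiMap, add_pow_expChar_pow, mul_pow, hq, ← pow_mul, ← pow_add, two_mul]

variable (F) in
def frobeniusFixedField (p d : ℕ) [ExpChar F p] : Subfield F :=
  (iterateFrobenius F p d).eqLocusField (RingHom.id F)

theorem mem_frobeniusFixedField {p d : ℕ} [ExpChar F p] {c : F} :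
    c ∈ frobeniusFixedField F p d ↔ c ^ p ^ d = c :=
  Iff.rfl

theorem natCard_frobeniusFixedField [Fintype F] {p n d : ℕ} [Fact p.Prime] [CharP F p]
    (hF : Fintype.card F = p ^ n) (hd : d ≠ 0) (hdn : d ∣ n) :
    Nat.card (frobeniusFixedField F p d) = p ^ d := by
  have hp : 1 < p := (Fact.out : p.Prime).one_lt
  have hsplit : Splits (X ^ p ^ n - X : F[X]) := by
    rw [splits_iff_card_roots, ← hF, FiniteField.roots_X_pow_card_sub_X,
      FiniteField.X_pow_card_sub_X_natDegree_eq _ Fintype.one_lt_card]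
    rfl
  have hroots : (frobeniusFixedField F p d : Set F) = (X ^ p ^ d - X : F[X]).rootSet F := by
    ext c
    simp [mem_rootSet, FiniteField.X_pow_card_pow_sub_X_ne_zero F hd hp, sub_eq_zero,
      mem_frobeniusFixedField]
  rw [← SetLike.coe_sort_coe, hroots, Nat.card_eq_fintype_card,
    card_rootSet_eq_natDegree (galois_poly_separable p _ (dvd_pow_self p hd)),
    FiniteField.X_pow_card_pow_sub_X_natDegree_eq F hd hp]
  rw [Algebra.algebraMap_self, map_id]
  exact hsplit.of_dvd (hF ▸ FiniteField.X_pow_card_sub_X_ne_zero F Fintype.one_lt_card)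
    (dvd_pow_pow_sub_self_of_dvd hdn)

def iterateFrobeniusLinear (p : ℕ) [ExpChar F p] {d j : ℕ} (hdj : d ∣ j) :
    F →ₗ[frobeniusFixedField F p d] F where
  toFun x := x ^ p ^ j
  map_add' x y := add_pow_expChar_pow x y p j
  map_smul' c x := by
    simp [Subfield.smul_def, mul_pow, pow_pow_eq_self_of_dvd (mem_frobeniusFixedField.mp c.2) hdj]

@[simp]
theorem iterateFrobeniusLinear_apply {p : ℕ} [ExpChar F p] {d j : ℕ} (hdj : d ∣ j) (x : F) :
    iterateFrobeniusLinear p hdj x = x ^ p ^ j :=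
  rfl

def phiLinear (p : ℕ) [ExpChar F p] {m n k d : ℕ} (hm : d ∣ m) (hk : d ∣ k)
    (hnk : d ∣ n - k) (α β : F) : F →ₗ[frobeniusFixedField F p d] F :=
  α • iterateFrobeniusLinear p hm + β • iterateFrobeniusLinear p hk +
    β ^ p ^ (n - k) • iterateFrobeniusLinear p hnk

theorem phiLinear_apply {p : ℕ} [ExpChar F p] {m n k d : ℕ} (hm : d ∣ m) (hk : d ∣ k)
    (hnk : d ∣ n - k) (α β x : F) : phiLinear p hm hk hnk α β x = phiMap p m n k α β x :=
  rfl

theorem Submodule.finrank_le_one_of_div_mem {E : Subfield F} (S : Submodule E F)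
    (h : ∀ v ∈ S, ∀ w ∈ S, v / w ∈ E) : finrank E S ≤ 1 := by
  rcases eq_or_ne S ⊥ with rfl | hS
  · simp
  obtain ⟨w, hwS, hw0⟩ := Submodule.exists_mem_ne_zero_of_ne_bot hS
  refine finrank_le_one ⟨w, hwS⟩ fun v => ⟨⟨v / w, h _ v.2 _ hwS⟩, Subtype.ext ?_⟩
  simp [Subfield.smul_def, div_mul_cancel₀ _ hw0]

theorem finrank_ker_phiLinear_le_two [Fintype F] {p m n k d : ℕ} [Fact p.Prime] [CharP F p]
    (hF : Fintype.card F = p ^ n) (hn : n = 2 * m) (hkn : k ≤ n) (hgcd : (m + k).gcd n = d)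
    (hm : d ∣ m) (hk : d ∣ k) (hnk : d ∣ n - k) {α β : F} (hne : ¬(α = 0 ∧ β = 0)) :
    finrank (frobeniusFixedField F p d) (LinearMap.ker (phiLinear p hm hk hnk α β)) ≤ 2 := by
  have hp : p ≠ 0 := (Fact.out : p.Prime).ne_zero
  set K := LinearMap.ker (phiLinear p hm hk hnk α β)
  have mem_E {z : F} (hz : z ^ p ^ (m + k) = z) : z ∈ frobeniusFixedField F p d := by
    rw [mem_frobeniusFixedField, ← hgcd]
    exact pow_pow_gcd_eq_self hz (hF ▸ FiniteField.pow_card z)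
  have frob_sq (u : F) : (u ^ p ^ (m + k)) ^ p ^ (m + k) = u ^ p ^ (2 * k) := by
    rw [← pow_mul, ← pow_add, show m + k + (m + k) = n + 2 * k by omega, pow_add, pow_mul,
      ← hF, FiniteField.pow_card]
  have conj {y : F} (hy : y ∈ K) :
      α ^ p ^ k * y ^ p ^ (m + k) + β ^ p ^ k * y ^ p ^ (2 * k) + β * y = 0 := by
    rw [← phiMap_pow_pow hF hkn, ← phiLinear_apply hm hk hnk, LinearMap.mem_ker.mp hy,
      zero_pow (pow_ne_zero k hp)]
  rcases eq_or_ne K ⊥ with hK | hK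
  · rw [hK, finrank_bot]
    omega
  obtain ⟨x, hxK, hx0⟩ := Submodule.exists_mem_ne_zero_of_ne_bot hK
  have hβ : β ≠ 0 := by
    rintro rfl
    have hα : α ≠ 0 := fun hα => hne ⟨hα, rfl⟩
    simpa [hα, hx0, zero_pow (pow_ne_zero k hp)] using conj hxK
  let ψ : K →ₗ[frobeniusFixedField F p d] F :=
    (iterateFrobeniusLinear p (hgcd ▸ Nat.gcd_dvd_left _ _) - LinearMap.id) ∘ₗ
      LinearMap.mulRight _ x⁻¹ ∘ₗ K.subtype
  have hψ (y : K) : ψ y = (y / x) ^ p ^ (m + k) - y / x := by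
    simp [ψ, div_eq_mul_inv]
  have hker : finrank (frobeniusFixedField F p d) (LinearMap.ker ψ) ≤ 1 := by
    refine finrank_le_one ⟨⟨x, hxK⟩, by simp [hψ, hx0]⟩ fun y =>
      ⟨⟨y / x, mem_E ?_⟩, ?_⟩
    · rw [← sub_eq_zero, ← hψ]
      exact y.2
    · ext
      simp [Subfield.smul_def, div_mul_cancel₀ _ hx0]
  have eigen (y : K) : β ^ p ^ k * x ^ p ^ (2 * k) * ψ y ^ p ^ (m + k) =
      -(α ^ p ^ k * x ^ p ^ (m + k) + β ^ p ^ k * x ^ p ^ (2 * k)) * ψ y := by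
    rw [hψ]
    refine sub_pow_eq_of_linearized_roots (frob_sq _) (conj hxK) ?_
    rw [div_mul_cancel₀ _ hx0]
    exact conj y.2
  have hrange : finrank (frobeniusFixedField F p d) (LinearMap.range ψ) ≤ 1 := by
    refine Submodule.finrank_le_one_of_div_mem _ ?_
    rintro _ ⟨y, rfl⟩ _ ⟨z, rfl⟩
    exact mem_E (div_pow_eq_div_of_mul_pow_eq_mul (pow_ne_zero _ hp)
      (mul_ne_zero (pow_ne_zero _ hβ) (pow_ne_zero _ hx0)) (eigen y) (eigen z))
  have := ψ.finrank_range_add_finrank_ker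
  omega

theorem stmt0_general (p m k n d d' : ℕ) (hp : Nat.Prime p)
    (hm : 0 < m) (hn : n = 2 * m) (hk : k ≤ n - 1)
    (hd : d = Nat.gcd m k) (hd' : d' = Nat.gcd (m + k) (2 * k))
    (F : Type) [Field F] [Fintype F] [Algebra (ZMod p) F] (hF : Fintype.card F = p ^ n)
    (hcase : d' = d)
    (α β : F) (hne : ¬(α = 0 ∧ β = 0)) :
    Nat.card {x : F // phiMap p m n k α β x = 0} = 1 ∨
    Nat.card {x : F // phiMap p m n k α β x = 0} = p ^ d ∨
    Nat.card {x : F // phiMap p m n k α β x = 0} = p ^ (2 * d) := by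
  have := Fact.mk hp
  have : CharP F p := charP_of_injective_algebraMap (algebraMap (ZMod p) F).injective p
  have hdm : d ∣ m := hd ▸ Nat.gcd_dvd_left m k
  have hdk : d ∣ k := hd ▸ Nat.gcd_dvd_right m k
  have hdn : d ∣ n := hn ▸ dvd_mul_of_dvd_right hdm 2
  have hgcd : (m + k).gcd n = d := by
    rw [Nat.gcd_eq_gcd_of_add_eq_two_mul (c := 2 * k) (by omega), ← hd', hcase]
  have hdnk : d ∣ n - k := Nat.dvd_sub hdn hdk
  have hrank := finrank_ker_phiLinear_le_two hF hn (by omega) hgcd hdm hdk hdnk hne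
  have hcard : Nat.card {x : F // phiMap p m n k α β x = 0} =
      Nat.card (LinearMap.ker (phiLinear p hdm hdk hdnk α β)) :=
    rfl
  rw [hcard, Module.natCard_eq_pow_finrank (K := frobeniusFixedField F p d),
    natCard_frobeniusFixedField hF (hd ▸ (Nat.gcd_pos_of_pos_left k hm).ne') hdn, ← pow_mul,
    mul_comm 2]
  generalize finrank (frobeniusFixedField F p d) (LinearMap.ker (phiLinear p hdm hdk hdnk α β))
    = r at hrank ⊢
  interval_cases r <;> simp

theorem stmt0 (p m k n d d' s : ℕ) (hp : Nat.Prime p) (hodd : p % 2 = 1)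
    (hm : 0 < m) (hn : n = 2 * m) (hk : k ≤ n - 1) (hkm : k ≠ m)
    (hd : d = Nat.gcd m k) (hd' : d' = Nat.gcd (m + k) (2 * k)) (hs : s = n / d)
    (F : Type) [Field F] [Fintype F] [Algebra (ZMod p) F] (hF : Fintype.card F = p ^ n)
    (hcase : d' = d)
    (α β : F) (hα : α ^ p ^ m = α) (hne : ¬(α = 0 ∧ β = 0)) :
    Nat.card {x : F // phiMap p m n k α β x = 0} = 1 ∨
    Nat.card {x : F // phiMap p m n k α β x = 0} = p ^ d ∨
    Nat.card {x : F // phiMap p m n k α β x = 0} = p ^ (2 * d) :=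
  stmt0_general p m k n d d' hp hm hn hk hd hd' F hF hcase α β hne
end
end

section
/- Suppose d' = 2d. Then for every pair (α,β) ∈ F_{p^m} × F_q with (α,β) ≠ (0,0), the number of zeros in F_q of the F_{p^d}-linear map φ_{α,β}(x) = α x^{p^m} + β x^{p^k} + β^{p^{n−k}} x^{p^{n−k}} is 1, p^{2d}, or p^{4d} (equivalently, the rank of the associated quadratic form x ↦ Tr^m_d(α x^{p^m+1}) + Tr^n_d(β x^{p^k+1}) over F_{p^d} is s, s−2, or s−4). -/
open scoped BigOperators Classical

noncomputable section

/-!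
The map `φ = phiMap p m n k α β` is additive. Since `d' = 2d`, both `m / d` and `k / d` are odd, so
`m`, `k` and `n - k` are all `≡ d (mod 2d)`; hence `φ (c x) = c ^ p ^ d * φ x` for `c` in the
subfield with `p ^ (2d)` elements, and the zeros of `φ` form a vector space over it, of size
`p ^ (2d r)`.

For the bound `r ≤ 2`, substitute `y = x ^ p ^ k` (or `x ^ p ^ (n - k)`): `φ` becomes
`a y + b y ^ q + c y ^ (q ^ 2)` with `q = p ^ |m - k|` and `a, c ≠ 0`. Let `G` be the fixed field of
`u ↦ u ^ q`. The nonzero zeros are mapped by `y ↦ y ^ (q - 1)` to roots of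
`c z ^ (q + 1) + b z + a`, with fibres of size at most `|G| - 1`. On these roots `z ^ q` is a Möbius
function of `z`, so cross-ratios of roots are fixed by `u ↦ u ^ q`, i.e. lie in `G`; this allows at
most `|G| + 1` roots. Altogether there are at most `|G| ^ 2` zeros, and `|G| ≤ p ^ (2d)` because
`gcd (|m - k|, n)` divides `2d`.
-/

open Finset Function

section Frobenius

variable {R : Type*} [CommSemiring R] {p : ℕ} [ExpChar R p]

theorem isPeriodicPt_frobenius_iff {r : ℕ} {x : R} :
    IsPeriodicPt (frobenius R p) r x ↔ x ^ p ^ r = x := by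
  rw [IsPeriodicPt, IsFixedPt, iterate_frobenius]

theorem pow_pow_eq_of_modEq {r a b : ℕ} {x : R} (hx : x ^ p ^ r = x) (hab : a ≡ b [MOD r]) :
    x ^ p ^ a = x ^ p ^ b := by
  have hper := isPeriodicPt_frobenius_iff.2 hx
  rw [← iterate_frobenius, ← iterate_frobenius, ← hper.iterate_mod_apply,
    ← hper.iterate_mod_apply b, hab]

theorem pow_pow_eq_self_of_gcd_dvd {a b r : ℕ} {x : R} (ha : x ^ p ^ a = x)
    (hb : x ^ p ^ b = x) (hr : a.gcd b ∣ r) : x ^ p ^ r = x :=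
  isPeriodicPt_frobenius_iff.1 <|
    ((isPeriodicPt_frobenius_iff.2 ha).gcd (isPeriodicPt_frobenius_iff.2 hb)).trans_dvd hr

end Frobenius

section FixedPoints

variable {F : Type*} [Field F] [Fintype F]

theorem card_filter_pow_eq_self_le {N : ℕ} (hN : 1 < N) : #{u : F | u ^ N = u} ≤ N := by
  open Polynomial in
  calc #{u : F | u ^ N = u} ≤ (X ^ N - X : F[X]).natDegree := by
        refine card_le_degree_of_subset_roots fun u hu ↦ ?_
        rw [mem_roots (FiniteField.X_pow_card_sub_X_ne_zero F hN)]
        simpa [sub_eq_zero] using hu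
    _ = N := FiniteField.X_pow_card_sub_X_natDegree_eq F hN

theorem card_filter_pow_pow_eq_self_le {p n e r : ℕ} [Fact p.Prime] [CharP F p]
    (hF : Fintype.card F = p ^ n) (he : e.gcd n ∣ r) (hr : 0 < r) :
    #{u : F | u ^ p ^ e = u} ≤ p ^ r :=
  calc #{u : F | u ^ p ^ e = u} ≤ #{u : F | u ^ p ^ r = u} := by
        refine card_le_card fun u hu ↦ mem_filter.2 ⟨mem_univ u, ?_⟩
        refine pow_pow_eq_self_of_gcd_dvd (mem_filter.1 hu).2 ?_ he
        rw [← hF, FiniteField.pow_card]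
    _ ≤ p ^ r := card_filter_pow_eq_self_le (Nat.one_lt_pow hr.ne' (Fact.out : p.Prime).one_lt)

end FixedPoints

section CrossRatio

variable {F : Type*} [Field F]

def crossRatio (z z₁ z₂ z₃ : F) : F := (z - z₂) * (z₁ - z₃) / ((z - z₃) * (z₁ - z₂))

theorem map_crossRatio {K : Type*} [Field K] (f : F →+* K) (z z₁ z₂ z₃ : F) :
    f (crossRatio z z₁ z₂ z₃) = crossRatio (f z) (f z₁) (f z₂) (f z₃) := by
  simp only [crossRatio, map_div₀, map_mul, map_sub]

theorem crossRatio_add_div {s t z z₁ z₂ z₃ : F} (ht : t ≠ 0) (hz : z ≠ 0) (hz₁ : z₁ ≠ 0)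
    (hz₂ : z₂ ≠ 0) (hz₃ : z₃ ≠ 0) :
    crossRatio (s + t / z) (s + t / z₁) (s + t / z₂) (s + t / z₃) = crossRatio z z₁ z₂ z₃ := by
  have hsub : ∀ {w w'}, w ≠ 0 → w' ≠ 0 → s + t / w - (s + t / w') = t / (w * w') * (w' - w) := by
    intro w w' hw hw'
    field_simp
    ring
  have hu : t ^ 2 / (z * z₁ * z₂ * z₃) ≠ 0 := by simp [*]
  rw [crossRatio, crossRatio, hsub hz hz₂, hsub hz₁ hz₃, hsub hz hz₃, hsub hz₁ hz₂,
    ← mul_div_mul_left ((z - z₂) * (z₁ - z₃)) _ hu]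
  congr 1 <;> ring

theorem crossRatio_injOn {z₁ z₂ z₃ : F} (h₁₂ : z₁ ≠ z₂) (h₁₃ : z₁ ≠ z₃) (h₂₃ : z₂ ≠ z₃) :
    Set.InjOn (crossRatio · z₁ z₂ z₃) {z₃}ᶜ := by
  intro z hz w hw hzw
  have hz' : z - z₃ ≠ 0 := sub_ne_zero.2 hz
  have hw' : w - z₃ ≠ 0 := sub_ne_zero.2 hw
  have h₁₂' : z₁ - z₂ ≠ 0 := sub_ne_zero.2 h₁₂
  simp only [crossRatio] at hzw
  rw [div_eq_div_iff (mul_ne_zero hz' h₁₂') (mul_ne_zero hw' h₁₂')] at hzw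
  have : (z₁ - z₃) * (z₁ - z₂) * (z₃ - z₂) * (w - z) = 0 := by linear_combination hzw
  simpa [sub_eq_zero, h₁₃, h₁₂, h₂₃.symm, eq_comm] using this

end CrossRatio

section LinearizedZeros

variable {F : Type*} [Field F] {p : ℕ} [ExpChar F p]

theorem linearized_eq_mul {e : ℕ} (a b c y : F) :
    a * y + b * y ^ p ^ e + c * y ^ p ^ (2 * e) =
      y * (c * (y ^ (p ^ e - 1)) ^ (p ^ e + 1) + b * y ^ (p ^ e - 1) + a) := by
  obtain ⟨r, hr⟩ : ∃ r, p ^ e = r + 1 := ⟨p ^ e - 1, by have := expChar_pow_pos F p e; omega⟩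
  rw [mul_comm 2 e, pow_mul, hr, Nat.add_sub_cancel]
  ring

variable [Fintype F]

theorem card_filter_frobenius_eq_moebius_le {e : ℕ} {a b c : F} (ha : a ≠ 0) (hc : c ≠ 0) :
    #{z : F | c * z ^ (p ^ e + 1) + b * z + a = 0} ≤ #{u : F | u ^ p ^ e = u} + 1 := by
  set Z : Finset F := {z | c * z ^ (p ^ e + 1) + b * z + a = 0}
  set G : Finset F := {u | u ^ p ^ e = u}
  have hZ0 : ∀ z ∈ Z, z ≠ 0 := by
    rintro z hz rfl
    simp [Z, ha] at hz
  have hfrob : ∀ z ∈ Z, z ^ p ^ e = -b / c + -a / c / z := by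
    intro z hz
    have hz' := (mem_filter.1 hz).2
    field_simp [hZ0 z hz]
    linear_combination hz'
  by_cases hZ : #Z ≤ 2
  · have : 0 < #G := card_pos.2 ⟨0, by simp [G, (expChar_pos F p).ne']⟩
    omega
  obtain ⟨z₁, hz₁, z₂, hz₂, z₃, hz₃, h₁₂, h₁₃, h₂₃⟩ := two_lt_card.1 (not_le.1 hZ)
  have : #(Z.erase z₃) ≤ #G := by
    refine card_le_card_of_injOn (crossRatio · z₁ z₂ z₃) (fun z hz ↦ ?_) ?_
    · have hzZ := mem_of_mem_erase hz
      rw [mem_coe, mem_filter]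
      refine ⟨mem_univ _, ?_⟩
      rw [← iterateFrobenius_def, map_crossRatio]
      simp only [iterateFrobenius_def, hfrob _ hzZ, hfrob _ hz₁, hfrob _ hz₂, hfrob _ hz₃]
      exact crossRatio_add_div (by simp [ha, hc]) (hZ0 _ hzZ) (hZ0 _ hz₁) (hZ0 _ hz₂) (hZ0 _ hz₃)
    · exact (crossRatio_injOn h₁₂ h₁₃ h₂₃).mono fun z hz ↦ ne_of_mem_erase hz
  rw [← card_erase_add_one hz₃]
  omega

theorem card_filter_linearized_eq_zero_le {e : ℕ} {a b c : F} (ha : a ≠ 0) (hc : c ≠ 0) :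
    #{y : F | a * y + b * y ^ p ^ e + c * y ^ p ^ (2 * e) = 0} ≤ #{u : F | u ^ p ^ e = u} ^ 2 := by
  set K : Finset F := {y | a * y + b * y ^ p ^ e + c * y ^ p ^ (2 * e) = 0}
  set Z : Finset F := {z | c * z ^ (p ^ e + 1) + b * z + a = 0}
  set G : Finset F := {u | u ^ p ^ e = u}
  have hq : 1 ≤ p ^ e := expChar_pow_pos F p e
  have hK0 : (0 : F) ∈ K := by simp [K, (expChar_pos F p).ne']
  have hG0 : (0 : F) ∈ G := by simp [G, (expChar_pos F p).ne']
  have hmaps : ∀ y ∈ K.erase 0, y ^ (p ^ e - 1) ∈ Z := by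
    intro y hy
    obtain ⟨hy0, hyK⟩ := mem_erase.1 hy
    have hy' := (mem_filter.1 hyK).2
    rw [linearized_eq_mul, mul_eq_zero] at hy'
    exact mem_filter.2 ⟨mem_univ _, hy'.resolve_left hy0⟩
  have hfibre : ∀ z ∈ Z, #{y ∈ K.erase 0 | y ^ (p ^ e - 1) = z} ≤ #G - 1 := by
    intro z _
    rcases ({y ∈ K.erase 0 | y ^ (p ^ e - 1) = z} : Finset F).eq_empty_or_nonempty with
      h | ⟨y₀, hy₀⟩
    · simp [h]
    obtain ⟨hy₀K, rfl⟩ := mem_filter.1 hy₀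
    have hy₀0 := ne_of_mem_erase hy₀K
    rw [← card_erase_of_mem hG0]
    refine card_le_card_of_injOn (· / y₀) (fun y hy ↦ ?_)
      fun y _ y' _ h ↦ (div_left_inj' hy₀0).1 h
    obtain ⟨hyK, hyz⟩ := mem_filter.1 hy
    have hy0 := ne_of_mem_erase hyK
    have h1 : (y / y₀) ^ (p ^ e - 1) = 1 := by rw [div_pow, hyz, div_self (pow_ne_zero _ hy₀0)]
    refine mem_erase.2 ⟨div_ne_zero hy0 hy₀0, mem_filter.2 ⟨mem_univ _, ?_⟩⟩
    rw [← Nat.sub_add_cancel hq, pow_succ, h1, one_mul]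
  have hcount := card_le_mul_card_image_of_maps_to hmaps _ hfibre
  have hZ := card_filter_frobenius_eq_moebius_le (p := p) (e := e) (b := b) ha hc
  have hG : 1 ≤ #G := card_pos.2 ⟨0, hG0⟩
  calc #K = #(K.erase 0) + 1 := (card_erase_add_one hK0).symm
    _ ≤ (#G - 1) * (#G + 1) + 1 := by gcongr; exact hcount.trans (Nat.mul_le_mul_left _ hZ)
    _ = #G ^ 2 := by
      obtain ⟨g, hg⟩ : ∃ g, #G = g + 1 := ⟨#G - 1, by omega⟩
      rw [hg, Nat.add_sub_cancel]
      ring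

end LinearizedZeros

section FrobeniusTwist

variable {F : Type*} [Field F] [Fintype F]

theorem natCard_linearized_zeros_le {p n j e r : ℕ} [Fact p.Prime] [CharP F p]
    (hF : Fintype.card F = p ^ n) (he : e.gcd n ∣ r) (hr : 0 < r) {a b c : F} (ha : a ≠ 0)
    (hc : c ≠ 0) :
    Nat.card {x : F // a * x ^ p ^ j + b * x ^ p ^ (j + e) + c * x ^ p ^ (j + 2 * e) = 0} ≤
      (p ^ r) ^ 2 := by
  calc Nat.card {x : F // a * x ^ p ^ j + b * x ^ p ^ (j + e) + c * x ^ p ^ (j + 2 * e) = 0}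
      = Nat.card {y : F // a * y + b * y ^ p ^ e + c * y ^ p ^ (2 * e) = 0} := by
        refine Nat.card_congr (Equiv.subtypeEquiv
          (Equiv.ofBijective _ (bijective_iterateFrobenius F p j)) fun x ↦ ?_)
        simp only [Equiv.ofBijective_apply, iterateFrobenius_def, pow_add, pow_mul]
    _ = #{y : F | a * y + b * y ^ p ^ e + c * y ^ p ^ (2 * e) = 0} := by
        rw [Nat.card_eq_fintype_card, Fintype.card_subtype]
    _ ≤ #{u : F | u ^ p ^ e = u} ^ 2 := card_filter_linearized_eq_zero_le ha hc
    _ ≤ (p ^ r) ^ 2 := by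
        gcongr
        exact card_filter_pow_pow_eq_self_le hF he hr

end FrobeniusTwist

section Subfield

variable {F : Type*} [Field F] [Fintype F]

theorem exists_natCard_eq_pow_of_mul_mem (E : Subfield F) (S : AddSubgroup F)
    (h : ∀ c ∈ E, ∀ x ∈ S, c * x ∈ S) : ∃ r, Nat.card S = Nat.card E ^ r := by
  let M : Submodule E F := { S with smul_mem' := fun c x hx ↦ h c c.2 x hx }
  have := Fintype.ofFinite M
  refine ⟨Module.finrank E M, ?_⟩
  rw [show Nat.card S = Nat.card M from rfl, Nat.card_eq_fintype_card, Nat.card_eq_fintype_card,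
    Module.card_eq_pow_finrank (K := E) (V := M)]

theorem exists_subfield_natCard_eq {p n r : ℕ} [Fact p.Prime] [Algebra (ZMod p) F]
    (hF : Fintype.card F = p ^ n) (hr : r ≠ 0) (hrn : r ∣ n) :
    ∃ E : Subfield F, Nat.card E = p ^ r ∧ ∀ c ∈ E, c ^ p ^ r = c := by
  have hp : 1 < p := (Fact.out : p.Prime).one_lt
  have hn : Module.finrank (ZMod p) F = n := by
    refine Nat.pow_right_injective hp ?_
    dsimp only
    rw [← hF, Module.card_eq_pow_finrank (K := ZMod p), ZMod.card]
  obtain ⟨f⟩ := FiniteField.nonempty_algHom_of_finrank_dvd (K := GaloisField p r) (L := F)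
    (by rw [GaloisField.finrank p hr, hn]; exact hrn)
  have := Fintype.ofFinite (GaloisField p r)
  have hcard : Fintype.card (GaloisField p r) = p ^ r := by
    rw [Fintype.card_eq_nat_card, GaloisField.card p r hr]
  refine ⟨f.toRingHom.fieldRange, ?_, ?_⟩
  · rw [← GaloisField.card p r hr, ← Nat.card_range_of_injective f.injective]
    rfl
  · rintro _ ⟨x, rfl⟩
    rw [← map_pow, ← hcard, FiniteField.pow_card]

end Subfield

theorem Nat.modEq_gcd_of_two_mul_gcd_dvd_add {m k : ℕ} (h : 2 * m.gcd k ∣ m + k) :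
    m ≡ m.gcd k [MOD 2 * m.gcd k] := by
  obtain ⟨m', k', hcop, hm, hk⟩ := Nat.exists_coprime m k
  set d := m.gcd k
  rcases Nat.eq_zero_or_pos d with hd | hd
  · simp [hm, hd]
  rw [hm, hk, ← add_mul] at h
  have hsum : 2 ∣ m' + k' := Nat.dvd_of_mul_dvd_mul_right hd h
  have hodd : m' ≡ 1 [MOD 2] := by
    by_contra hev
    have h2m : 2 ∣ m' := by unfold Nat.ModEq at hev; omega
    have h2k : 2 ∣ k' := (Nat.dvd_add_right h2m).1 hsum
    have := Nat.dvd_gcd h2m h2k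
    rw [hcop.gcd_eq_one] at this
    omega
  rw [hm, mul_comm m', mul_comm 2]
  simpa using hodd.mul_left' d

section PhiMap

variable {F : Type} [Field F] {p m n k : ℕ}

theorem phiMap_mul [ExpChar F p] {r d : ℕ} {c : F} (hc : c ^ p ^ r = c) (hm : m ≡ d [MOD r])
    (hk : k ≡ d [MOD r]) (hnk : n - k ≡ d [MOD r]) (α β x : F) :
    phiMap p m n k α β (c * x) = c ^ p ^ d * phiMap p m n k α β x := by
  simp only [phiMap, mul_pow, pow_pow_eq_of_modEq hc hm, pow_pow_eq_of_modEq hc hk,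
    pow_pow_eq_of_modEq hc hnk]
  ring

variable (p m n k) in
def phiHom [ExpChar F p] (α β : F) : F →+ F :=
  AddMonoidHom.mk' (phiMap p m n k α β) fun x y ↦ by
    simp only [phiMap, add_pow_expChar_pow]
    ring

end PhiMap

section PhiMapZeros

variable {F : Type} [Field F] [Fintype F] {p m n k : ℕ} [Fact p.Prime] [CharP F p]

theorem exists_natCard_phiMap_zeros_eq_pow [Algebra (ZMod p) F] (hF : Fintype.card F = p ^ n)
    (hn : n = 2 * m) (hkn : k < n) (hd : 0 < m.gcd k) (hmk : 2 * m.gcd k ∣ m + k) (α β : F) :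
    ∃ r, Nat.card {x : F // phiMap p m n k α β x = 0} = (p ^ (2 * m.gcd k)) ^ r := by
  have hm := Nat.modEq_gcd_of_two_mul_gcd_dvd_add hmk
  have hk : k ≡ m.gcd k [MOD 2 * m.gcd k] := by
    rw [Nat.gcd_comm] at hmk ⊢
    exact Nat.modEq_gcd_of_two_mul_gcd_dvd_add (add_comm m k ▸ hmk)
  set d := m.gcd k
  obtain ⟨E, hE, hEfix⟩ := exists_subfield_natCard_eq (r := 2 * d) hF (by omega)
    (hn ▸ Nat.mul_dvd_mul_left 2 (Nat.gcd_dvd_left m k))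
  have hnk : n - k ≡ d [MOD 2 * d] := by
    refine Nat.ModEq.add_right_cancel' k ?_
    rw [Nat.sub_add_cancel hkn.le, hn, two_mul m]
    exact hm.add (hm.trans hk.symm)
  obtain ⟨r, hr⟩ := exists_natCard_eq_pow_of_mul_mem E (phiHom p m n k α β).ker
    fun c hc x hx ↦ by
      rw [AddMonoidHom.mem_ker] at hx ⊢
      simp only [phiHom, AddMonoidHom.mk'_apply] at hx ⊢
      rw [phiMap_mul (hEfix c hc) hm hk hnk, hx, mul_zero]
  exact ⟨r, hE ▸ hr⟩

theorem natCard_phiMap_zeros_le (hF : Fintype.card F = p ^ n) (hn : n = 2 * m) (hkn : k < n)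
    (hkm : k ≠ m) (hd : 0 < m.gcd k) (α : F) {β : F} (hβ : β ≠ 0) :
    Nat.card {x : F // phiMap p m n k α β x = 0} ≤ (p ^ (2 * m.gcd k)) ^ 2 := by
  have hβ' : β ^ p ^ (n - k) ≠ 0 := pow_ne_zero _ hβ
  rcases hkm.lt_or_gt with h | h
  · obtain ⟨e, rfl⟩ := Nat.exists_eq_add_of_le h.le
    have he : e.gcd n ∣ 2 * (k + e).gcd k := by
      rw [← Nat.gcd_mul_left]
      refine Nat.dvd_gcd (hn ▸ Nat.gcd_dvd_right e n)
        ((Nat.dvd_add_left (b := 2 * k) (c := 2 * e) ?_).1 ?_)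
      · exact (Nat.gcd_dvd_left e n).mul_left 2
      · rw [← mul_add, ← hn]
        exact Nat.gcd_dvd_right e n
    have hφ : ∀ x : F, phiMap p (k + e) n k α β x =
        β * x ^ p ^ k + α * x ^ p ^ (k + e) + β ^ p ^ (n - k) * x ^ p ^ (k + 2 * e) := by
      intro x
      rw [phiMap, show k + 2 * e = n - k by omega]
      ring
    simp_rw [hφ]
    exact natCard_linearized_zeros_le hF he (by omega) hβ hβ'
  · obtain ⟨e, rfl⟩ := Nat.exists_eq_add_of_le h.le
    have he : e.gcd n ∣ 2 * m.gcd (m + e) := by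
      rw [← Nat.gcd_mul_left]
      refine Nat.dvd_gcd (hn ▸ Nat.gcd_dvd_right e n) ?_
      rw [mul_add, ← hn]
      exact Nat.dvd_add (Nat.gcd_dvd_right e n) ((Nat.gcd_dvd_left e n).mul_left 2)
    have hφ : ∀ x : F, phiMap p m n (m + e) α β x =
        β ^ p ^ (n - (m + e)) * x ^ p ^ (n - (m + e)) + α * x ^ p ^ (n - (m + e) + e) +
          β * x ^ p ^ (n - (m + e) + 2 * e) := by
      intro x
      rw [phiMap, show n - (m + e) + e = m by omega, show n - (m + e) + 2 * e = m + e by omega]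
      ring
    simp_rw [hφ]
    exact natCard_linearized_zeros_le hF he (by omega) hβ' hβ

end PhiMapZeros

theorem stmt1_general (p m k n d d' : ℕ) (hp : Nat.Prime p)
    (hm : 0 < m) (hn : n = 2 * m) (hk : k ≤ n - 1) (hkm : k ≠ m)
    (hd : d = Nat.gcd m k) (hd' : d' = Nat.gcd (m + k) (2 * k))
    (F : Type) [Field F] [Fintype F] [Algebra (ZMod p) F] (hF : Fintype.card F = p ^ n)
    (hcase : d' = 2 * d)
    (α β : F) (hne : ¬(α = 0 ∧ β = 0)) :
    Nat.card {x : F // phiMap p m n k α β x = 0} = 1 ∨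
    Nat.card {x : F // phiMap p m n k α β x = 0} = p ^ (2 * d) ∨
    Nat.card {x : F // phiMap p m n k α β x = 0} = p ^ (4 * d) := by
  have := Fact.mk hp
  have := charP_of_injective_algebraMap (algebraMap (ZMod p) F).injective p
  rcases eq_or_ne β 0 with rfl | hβ
  · have hα : α ≠ 0 := fun h ↦ hne ⟨h, rfl⟩
    refine Or.inl (Nat.card_eq_one_iff_exists.2
      ⟨⟨0, by simp [phiMap, hp.ne_zero]⟩, fun x ↦ Subtype.ext ?_⟩)
    simpa [phiMap, hα, hp.ne_zero] using x.2
  subst hd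
  have hkn : k < n := by omega
  have hd : 0 < m.gcd k := Nat.gcd_pos_of_pos_left k hm
  have hmk : 2 * m.gcd k ∣ m + k := hcase ▸ hd' ▸ Nat.gcd_dvd_left _ _
  obtain ⟨r, hr⟩ := exists_natCard_phiMap_zeros_eq_pow hF hn hkn hd hmk α β
  have hle := natCard_phiMap_zeros_le hF hn hkn hkm hd α hβ
  rw [hr] at hle ⊢
  have hr2 : r ≤ 2 := (Nat.pow_le_pow_iff_right (Nat.one_lt_pow (by omega) hp.one_lt)).1 hle
  interval_cases r
  · exact Or.inl (pow_zero _)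
  · exact Or.inr (Or.inl (pow_one _))
  · exact Or.inr (Or.inr (by rw [← pow_mul]; ring_nf))

theorem stmt1 (p m k n d d' : ℕ) (hp : Nat.Prime p) (hodd : p % 2 = 1)
    (hm : 0 < m) (hn : n = 2 * m) (hk : k ≤ n - 1) (hkm : k ≠ m)
    (hd : d = Nat.gcd m k) (hd' : d' = Nat.gcd (m + k) (2 * k))
    (F : Type) [Field F] [Fintype F] [Algebra (ZMod p) F] (hF : Fintype.card F = p ^ n) (s : ℕ) (hs : s = n / d)
    (hcase : d' = 2 * d)
    (α β : F) (hα : α ^ p ^ m = α) (hne : ¬(α = 0 ∧ β = 0)) :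
    Nat.card {x : F // phiMap p m n k α β x = 0} = 1 ∨
    Nat.card {x : F // phiMap p m n k α β x = 0} = p ^ (2 * d) ∨
    Nat.card {x : F // phiMap p m n k α β x = 0} = p ^ (4 * d) :=
  stmt1_general p m k n d d' hp hm hn hk hkm hd hd' F hF hcase α β hne
end
end

section
/- Suppose d' = 2d and (α,β) ∈ F_{p^m} × F_q with (α,β) ≠ (0,0). Let N be the number of pairs (x,y) ∈ F_q × F_q satisfying (1/2)·α x^{p^m+1} + β x^{p^k+1} = y^{p^d} − y. Then, as complex numbers, N = q + (p^d − 1)·T(α,β). -/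
open scoped BigOperators Classical

noncomputable section

/-!
Let `ψ = ζ_p^{Tr}` be the canonical additive character of `F = 𝔽_q`. By orthogonality of `ψ`,
and because `Tr(z y^{p^d}) = Tr(z^{p^{n-d}} y)`, the equation `y^{p^d} - y = c` has
`∑_{z ∈ 𝔽_{p^d}} ψ(z c)` solutions, so `N = ∑_{z ∈ 𝔽_{p^d}} ∑_x ψ(z f(x))` where `f` is the
left-hand side. The term `z = 0` contributes `q`. The condition `d' = 2d` forces
`m ≡ k ≡ d (mod 2d)`, so every `z ∈ 𝔽_{p^d}^*` satisfies `z⁻¹ = u^{p^d+1} = u^{p^m+1} = u^{p^k+1}`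
for some `u ∈ 𝔽_{p^{2d}}`, and `x ↦ u x` turns the `z`-term into `∑_x ψ(f(x))`. This is
`T(α,β)` because `Tr^n_1(α x^{p^m+1} / 2) = Tr^m_1(α x^{p^m+1})`.
-/

open Finset

theorem AddChar.map_pow_char_pow {R M : Type*} [Semiring R] [Monoid M] {p : ℕ}
    {ψ : AddChar R M} (hψ : ∀ x, ψ (x ^ p) = ψ x) (x : R) (j : ℕ) : ψ (x ^ p ^ j) = ψ x := by
  induction j with
  | zero => simp
  | succ j ih => rw [pow_succ, pow_mul, hψ, ih]

theorem pow_pow_mul_eq_self {M : Type*} [Monoid M] {p e : ℕ} {x : M} (hx : x ^ p ^ e = x)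
    (t : ℕ) : x ^ p ^ (e * t) = x := by
  induction t with
  | zero => simp
  | succ t ih => rw [Nat.mul_succ, pow_add, pow_mul, ih, hx]

theorem IsCyclic.exists_pow_eq_and_pow_eq_one {G : Type*} [CommGroup G] [Finite G] [IsCyclic G]
    {a b : ℕ} (hab : a * b ∣ Nat.card G) {l : G} (hl : l ^ b = 1) :
    ∃ u : G, u ^ a = l ∧ u ^ (a * b) = 1 := by
  obtain ⟨g, hg⟩ := IsCyclic.exists_generator (α := G)
  have hord : orderOf g = Nat.card G := orderOf_eq_card_of_forall_mem_zpowers hg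
  obtain ⟨c, hc⟩ := hab
  obtain ⟨i, rfl⟩ := mem_powers_iff_mem_zpowers.mpr (hg l)
  have hb : 0 < b := Nat.pos_of_ne_zero fun h => Nat.card_pos.ne' (by simpa [h] using hc)
  obtain ⟨j, rfl⟩ : a * c ∣ i := by
    refine Nat.dvd_of_mul_dvd_mul_right hb ?_
    rw [show a * c * b = Nat.card G by rw [hc]; ring, ← hord]
    exact orderOf_dvd_of_pow_eq_one (by simpa only [pow_mul] using hl)
  refine ⟨g ^ (c * j), by rw [← pow_mul]; ring_nf, ?_⟩
  rw [← pow_mul, show c * j * (a * b) = Nat.card G * j by rw [hc]; ring, pow_mul,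
    pow_card_eq_one', one_pow]

theorem exists_eq_gcd_add_two_mul_gcd_mul {m k : ℕ} (h : 2 * Nat.gcd m k ∣ m + k) :
    ∃ t, m = Nat.gcd m k + 2 * Nat.gcd m k * t := by
  obtain ⟨M, K, hcop, hM, hK⟩ := Nat.exists_coprime m k
  generalize Nat.gcd m k = d at *
  subst hM hK
  rcases Nat.eq_zero_or_pos d with rfl | hd0
  · exact ⟨0, by simp⟩
  have hMK : 2 ∣ M + K := Nat.dvd_of_mul_dvd_mul_right hd0 (by rwa [add_mul])
  obtain ⟨t, rfl⟩ : Odd M := by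
    rw [Nat.odd_iff]
    by_contra hM2
    exact Nat.not_coprime_of_dvd_of_dvd one_lt_two (by omega) (by omega) hcop
  exact ⟨t, by ring⟩

theorem exists_eq_gcd_add_two_mul_gcd_mul_of_gcd_eq {m k : ℕ}
    (h : Nat.gcd (m + k) (2 * k) = 2 * Nat.gcd m k) :
    (∃ t, m = Nat.gcd m k + 2 * Nat.gcd m k * t) ∧
      (∃ t, k = Nat.gcd m k + 2 * Nat.gcd m k * t) := by
  have h2d : 2 * Nat.gcd m k ∣ m + k := h ▸ Nat.gcd_dvd_left _ _
  refine ⟨exists_eq_gcd_add_two_mul_gcd_mul h2d, ?_⟩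
  rw [Nat.gcd_comm] at h2d ⊢
  exact exists_eq_gcd_add_two_mul_gcd_mul (by rwa [add_comm])

theorem expChar_eq_stdAddChar {p : ℕ} [NeZero p] (c : ZMod p) :
    expChar p c = ZMod.stdAddChar c := by
  rw [ZMod.stdAddChar_apply, ZMod.toCircle_apply, expChar]

section TraceCharacter

variable {p : ℕ} [Fact p.Prime] {F : Type} [Field F]

theorem fToZMod_algebraMap [Algebra (ZMod p) F] (a : ZMod p) :
    fToZMod p (algebraMap (ZMod p) F a) = a :=
  Function.leftInverse_invFun (algebraMap (ZMod p) F).injective a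

theorem trSum_two_mul_inv_two [CharP F p] (hp2 : p ≠ 2) (m : ℕ) {w : F} (hw : w ^ p ^ m = w) :
    trSum p 1 (2 * m) ((2 : F)⁻¹ * w) = trSum p 1 m w := by
  have h2 : (2 : F) ≠ 0 := Ring.two_ne_zero (by rwa [ringChar.eq F p])
  have hfix : ∀ i, ((2 : F)⁻¹) ^ p ^ i = (2 : F)⁻¹ := fun i => by
    rw [inv_pow, ← iterateFrobenius_def, map_ofNat]
  unfold trSum
  simp_rw [one_mul, mul_pow, hfix, ← mul_sum, two_mul m, sum_range_add, pow_add, pow_mul, hw]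
  field_simp
  ring

variable [Fintype F] [Algebra (ZMod p) F]

variable (p F) in
def traceAddChar : AddChar F ℂ :=
  (ZMod.stdAddChar (N := p)).compAddMonoidHom (Algebra.trace (ZMod p) F).toAddMonoidHom

theorem algebraMap_trace_eq_trSum {n : ℕ} (hF : Fintype.card F = p ^ n) (x : F) :
    algebraMap (ZMod p) F (Algebra.trace (ZMod p) F x) = trSum p 1 n x := by
  have hrank : Module.finrank (ZMod p) F = n := by
    have := Module.card_eq_pow_finrank (K := ZMod p) (V := F)
    rw [ZMod.card, hF] at this
    exact (Nat.pow_right_injective (Fact.out : p.Prime).two_le this).symm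
  simp [FiniteField.algebraMap_trace_eq_sum_pow, hrank, trSum]

theorem fToZMod_trSum {n : ℕ} (hF : Fintype.card F = p ^ n) (x : F) :
    fToZMod p (trSum p 1 n x) = Algebra.trace (ZMod p) F x := by
  rw [← algebraMap_trace_eq_trSum hF, fToZMod_algebraMap]

theorem traceAddChar_isPrimitive : (traceAddChar p F).IsPrimitive := by
  refine AddChar.IsPrimitive.of_ne_one fun h => ?_
  obtain ⟨x, hx⟩ := Algebra.trace_surjective (ZMod p) F 1
  have := DFunLike.congr_fun h x
  rw [traceAddChar, AddChar.compAddMonoidHom_apply, AddChar.one_apply] at this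
  simp only [LinearMap.toAddMonoidHom_coe, hx] at this
  rw [← (ZMod.stdAddChar (N := p)).map_zero_eq_one, ZMod.injective_stdAddChar.eq_iff] at this
  exact one_ne_zero this

theorem traceAddChar_pow_char (x : F) : traceAddChar p F (x ^ p) = traceAddChar p F x := by
  have := Algebra.trace_eq_of_algEquiv (FiniteField.frobeniusAlgEquivOfAlgebraic (ZMod p) F) x
  rw [FiniteField.coe_frobeniusAlgEquivOfAlgebraic, ZMod.card] at this
  simp [traceAddChar, this]

theorem Tsum_eq_sum_traceAddChar (hp2 : p ≠ 2) {m : ℕ} (k : ℕ) (hF : Fintype.card F = p ^ (2 * m))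
    {α : F} (hα : α ^ p ^ m = α) (β : F) :
    Tsum p m (2 * m) k F α β
      = ∑ x : F, traceAddChar p F ((2 : F)⁻¹ * α * x ^ (p ^ m + 1) + β * x ^ (p ^ k + 1)) := by
  have : CharP F p := charP_of_injective_algebraMap (algebraMap (ZMod p) F).injective p
  refine sum_congr rfl fun x _ => ?_
  have hw : (α * x ^ (p ^ m + 1)) ^ p ^ m = α * x ^ (p ^ m + 1) := by
    rw [mul_pow, hα, ← pow_mul, add_one_mul, ← pow_add, ← two_mul, pow_add, ← hF,
      FiniteField.pow_card, pow_succ, mul_comm x]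
  rw [← trSum_two_mul_inv_two hp2 m hw, fToZMod_trSum hF, fToZMod_trSum hF, ← map_add,
    expChar_eq_stdAddChar, mul_assoc]
  rfl

end TraceCharacter

section ArtinSchreier

variable {p n d : ℕ} [Fact p.Prime] {F : Type} [Field F] [Fintype F] [CharP F p]

theorem pow_pow_sub_eq_self_iff (hF : Fintype.card F = p ^ n) (hdn : d ≤ n) (z : F) :
    z ^ p ^ (n - d) = z ↔ z ^ p ^ d = z := by
  have hround : (z ^ p ^ (n - d)) ^ p ^ d = z := by
    rw [← pow_mul, ← pow_add, Nat.sub_add_cancel hdn, ← hF, FiniteField.pow_card]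
  refine ⟨fun h => by rwa [h] at hround, fun h => ?_⟩
  apply (iterateFrobenius F p d).injective
  rw [iterateFrobenius_def, iterateFrobenius_def, hround, h]

theorem sum_addChar_neg_mul_artinSchreier {ψ : AddChar F ℂ} (hψ : ψ.IsPrimitive)
    (hψp : ∀ x, ψ (x ^ p) = ψ x) (hF : Fintype.card F = p ^ n) (hdn : d ≤ n) (z : F) :
    ∑ y : F, ψ (-(z * (y ^ p ^ d - y))) = if z ^ p ^ d = z then (p ^ n : ℂ) else 0 := by
  have hshift : ∀ y : F, ψ (-(z * (y ^ p ^ d - y))) = ψ (y * (z - z ^ p ^ (n - d))) := by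
    intro y
    have hfrob : ψ (z * y ^ p ^ d) = ψ (y * z ^ p ^ (n - d)) := by
      rw [← AddChar.map_pow_char_pow hψp (z * y ^ p ^ d) (n - d), mul_pow, ← pow_mul,
        ← pow_add, Nat.add_sub_cancel' hdn, ← hF, FiniteField.pow_card, mul_comm]
    rw [show -(z * (y ^ p ^ d - y)) = y * z - z * y ^ p ^ d by ring, AddChar.map_sub_eq_div,
      hfrob, ← AddChar.map_sub_eq_div, mul_sub]
  simp_rw [hshift, AddChar.sum_mulShift _ hψ, sub_eq_zero, eq_comm (a := z),
    pow_pow_sub_eq_self_iff hF hdn, hF]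
  push_cast
  rfl

theorem card_artinSchreier_fiber {ψ : AddChar F ℂ} (hψ : ψ.IsPrimitive)
    (hψp : ∀ x, ψ (x ^ p) = ψ x) (hF : Fintype.card F = p ^ n) (hdn : d ≤ n) (c : F) :
    (#{y | y ^ p ^ d - y = c} : ℂ) = ∑ z with z ^ p ^ d = z, ψ (z * c) := by
  have hq : (p ^ n : ℂ) ≠ 0 := pow_ne_zero _ (Nat.cast_ne_zero.mpr (Fact.out : p.Prime).ne_zero)
  apply mul_left_cancel₀ hq
  calc (p ^ n : ℂ) * #{y | y ^ p ^ d - y = c}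
      = ∑ y : F, ∑ z : F, ψ (z * (c - (y ^ p ^ d - y))) := by
        simp_rw [AddChar.sum_mulShift _ hψ, sub_eq_zero, eq_comm (a := c), hF]
        push_cast
        rw [Finset.natCast_card_filter, mul_sum]
        simp_rw [mul_ite, mul_one, mul_zero]
    _ = ∑ z : F, ψ (z * c) * ∑ y : F, ψ (-(z * (y ^ p ^ d - y))) := by
        rw [sum_comm]
        simp_rw [mul_sum, mul_sub, sub_eq_add_neg, AddChar.map_add_eq_mul]
    _ = (p ^ n : ℂ) * ∑ z with z ^ p ^ d = z, ψ (z * c) := by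
        simp_rw [sum_addChar_neg_mul_artinSchreier hψ hψp hF hdn, mul_ite, mul_zero, mul_sum,
          sum_filter, mul_comm]

theorem card_artinSchreier_curve {ψ : AddChar F ℂ} (hψ : ψ.IsPrimitive)
    (hψp : ∀ x, ψ (x ^ p) = ψ x) (hF : Fintype.card F = p ^ n) (hdn : d ≤ n) (f : F → F) :
    (Nat.card {xy : F × F // f xy.1 = xy.2 ^ p ^ d - xy.2} : ℂ)
      = ∑ z with z ^ p ^ d = z, ∑ x : F, ψ (z * f x) := by
  rw [Nat.card_eq_fintype_card, Fintype.card_subtype, Finset.natCast_card_filter,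
    Fintype.sum_prod_type]
  simp_rw [eq_comm (a := f _), ← Finset.natCast_card_filter,
    card_artinSchreier_fiber hψ hψp hF hdn]
  exact sum_comm

end ArtinSchreier

section UnitGroup

variable {p n d : ℕ} [Fact p.Prime] {F : Type} [Field F] [Fintype F]

theorem card_filter_pow_pow_eq_self (hF : Fintype.card F = p ^ n) (hdn : d ∣ n) :
    #{z : F | z ^ p ^ d = z} = p ^ d := by
  have hpd : p ^ d ≠ 0 := pow_ne_zero _ (Fact.out : p.Prime).ne_zero
  have hroot : ∀ z : F, z ≠ 0 → (z ^ p ^ d = z ↔ z ^ (p ^ d - 1) = 1) := fun z hz => by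
    rw [← pow_sub_one_mul hpd, mul_eq_right₀ hz]
  have hker : #{u : Fˣ | u ^ (p ^ d - 1) = 1} = p ^ d - 1 := by
    have := IsCyclic.card_powMonoidHom_ker Fˣ (p ^ d - 1)
    rw [Nat.card_units, Nat.card_eq_fintype_card (α := F), hF, Nat.gcd_eq_right] at this
    · simpa [Nat.card_eq_fintype_card, Fintype.card_subtype] using this
    obtain ⟨s, rfl⟩ := hdn
    simpa [pow_mul] using Nat.sub_dvd_pow_sub_pow (p ^ d) 1 s
  have hunits : #{z : F | z ^ p ^ d = z ∧ z ≠ 0} = p ^ d - 1 := by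
    rw [← hker]
    symm
    refine Finset.card_bij (fun u _ => (u : F)) ?_ ?_ ?_
    · intro u hu
      simp only [mem_filter, mem_univ, true_and] at hu ⊢
      exact ⟨(hroot u u.ne_zero).mpr (by rw [← Units.val_pow_eq_pow_val, hu, Units.val_one]),
        u.ne_zero⟩
    · exact fun u _ v _ h => Units.val_injective h
    · intro z hz
      simp only [mem_filter, mem_univ, true_and] at hz
      refine ⟨Units.mk0 z hz.2, ?_, rfl⟩
      simp only [mem_filter, mem_univ, true_and]
      ext
      simpa using (hroot z hz.2).mp hz.1
  have hsplit : (univ.filter fun z : F => z ^ p ^ d = z)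
      = insert 0 (univ.filter fun z : F => z ^ p ^ d = z ∧ z ≠ 0) := by
    ext z
    by_cases hz : z = 0 <;> simp [hz, (Fact.out : p.Prime).ne_zero]
  rw [hsplit, card_insert_of_notMem (by simp), hunits,
    Nat.sub_add_cancel (Nat.one_le_iff_ne_zero.mpr hpd)]

theorem exists_pow_pow_add_one_eq (hF : Fintype.card F = p ^ n) (h2dn : 2 * d ∣ n) {l : F}
    (hl0 : l ≠ 0) (hl : l ^ p ^ d = l) :
    ∃ u : Fˣ, ∀ t, (u : F) ^ (p ^ (d + 2 * d * t) + 1) = l := by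
  have hp : 0 < p := (Fact.out : p.Prime).pos
  have hcard : (p ^ d + 1) * (p ^ d - 1) ∣ Nat.card Fˣ := by
    obtain ⟨s, rfl⟩ := h2dn
    rw [Nat.card_units, Nat.card_eq_fintype_card, hF, ← Nat.sq_sub_sq, one_pow, ← pow_mul,
      mul_comm d 2, pow_mul p (2 * d) s]
    simpa using Nat.sub_dvd_pow_sub_pow (p ^ (2 * d)) 1 s
  have hl1 : Units.mk0 l hl0 ^ (p ^ d - 1) = 1 := by
    ext
    refine mul_right_cancel₀ hl0 ?_
    rw [Units.val_pow_eq_pow_val, Units.val_mk0, ← pow_succ,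
      Nat.sub_add_cancel (Nat.one_le_pow _ _ hp), hl, Units.val_one, one_mul]
  obtain ⟨u, hu, hu1⟩ := IsCyclic.exists_pow_eq_and_pow_eq_one hcard hl1
  have hfix : (u : F) ^ p ^ (2 * d) = u := by
    have h : p ^ (2 * d) = (p ^ d + 1) * (p ^ d - 1) + 1 := by
      rw [← Nat.sq_sub_sq, one_pow, ← pow_mul, mul_comm d 2,
        Nat.sub_add_cancel (Nat.one_le_pow _ _ hp)]
    rw [h, pow_succ, ← Units.val_pow_eq_pow_val, hu1, Units.val_one, one_mul]
  refine ⟨u, fun t => ?_⟩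
  rw [pow_succ, pow_add p d, mul_comm (p ^ d), pow_mul (u : F), pow_pow_mul_eq_self hfix,
    ← pow_succ, ← Units.val_pow_eq_pow_val, hu, Units.val_mk0]

end UnitGroup

theorem sum_comp_mul_binomial_of_pow_eq_inv {F M : Type*} [Field F] [Fintype F]
    [AddCommMonoid M] (g : F → M) {l : F} (hl0 : l ≠ 0) (u : Fˣ) {a b : ℕ}
    (ha : (u : F) ^ a = l⁻¹) (hb : (u : F) ^ b = l⁻¹) (A B : F) :
    ∑ x : F, g (l * (A * x ^ a + B * x ^ b)) = ∑ x : F, g (A * x ^ a + B * x ^ b) := by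
  rw [← Equiv.sum_comp (Units.mulLeft u)]
  refine sum_congr rfl fun x _ => congrArg g ?_
  simp only [Units.mulLeft_apply]
  rw [mul_pow, mul_pow, ha, hb]
  field_simp

theorem stmt6_general (p m k n d d' : ℕ) (hp : Nat.Prime p) (hodd : p % 2 = 1)
    (hn : n = 2 * m)
    (hd : d = Nat.gcd m k) (hd' : d' = Nat.gcd (m + k) (2 * k))
    (F : Type) [Field F] [Fintype F] [Algebra (ZMod p) F] (hF : Fintype.card F = p ^ n) (hcase : d' = 2 * d)
    (α β : F) (hα : α ^ p ^ m = α) :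
    (Nat.card {xy : F × F // (2 : F)⁻¹ * α * xy.1 ^ (p ^ m + 1) + β * xy.1 ^ (p ^ k + 1)
        = xy.2 ^ p ^ d - xy.2} : ℂ)
      = (p : ℂ) ^ n + ((p : ℂ) ^ d - 1) * Tsum p m n k F α β := by
  have := Fact.mk hp
  have : CharP F p := charP_of_injective_algebraMap (algebraMap (ZMod p) F).injective p
  subst hn hd'
  obtain ⟨⟨tm, htm⟩, ⟨tk, htk⟩⟩ := exists_eq_gcd_add_two_mul_gcd_mul_of_gcd_eq (hd ▸ hcase)
  rw [← hd] at htm htk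
  have hdm : d ∣ m := hd ▸ Nat.gcd_dvd_left m k
  have hterm : ∀ l ∈ (univ.filter fun z : F => z ^ p ^ d = z).erase 0,
      ∑ x : F, traceAddChar p F (l * ((2 : F)⁻¹ * α * x ^ (p ^ m + 1) + β * x ^ (p ^ k + 1)))
        = Tsum p m (2 * m) k F α β := by
    intro l hl
    obtain ⟨hl0, hl⟩ : l ≠ 0 ∧ l ^ p ^ d = l := by simpa using hl
    obtain ⟨u, hu⟩ := exists_pow_pow_add_one_eq hF (mul_dvd_mul_left 2 hdm) (inv_ne_zero hl0)
      (by rw [inv_pow, hl])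
    rw [Tsum_eq_sum_traceAddChar (by omega) k hF hα]
    exact sum_comp_mul_binomial_of_pow_eq_inv _ hl0 u (htm ▸ hu tm) (htk ▸ hu tk) _ _
  have h0 : (0 : F) ∈ univ.filter fun z : F => z ^ p ^ d = z := by simp [hp.ne_zero]
  rw [card_artinSchreier_curve traceAddChar_isPrimitive traceAddChar_pow_char hF (by omega)
      (fun x => (2 : F)⁻¹ * α * x ^ (p ^ m + 1) + β * x ^ (p ^ k + 1)),
    ← add_sum_erase _ _ h0, sum_congr rfl hterm, sum_const, card_erase_of_mem h0,
    card_filter_pow_pow_eq_self hF (dvd_mul_of_dvd_right hdm 2)]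
  simp [hF, Nat.cast_sub (Nat.one_le_pow _ _ hp.pos)]

theorem stmt6 (p m k n d d' : ℕ) (hp : Nat.Prime p) (hodd : p % 2 = 1)
    (hm : 0 < m) (hn : n = 2 * m) (hk : k ≤ n - 1) (hkm : k ≠ m)
    (hd : d = Nat.gcd m k) (hd' : d' = Nat.gcd (m + k) (2 * k))
    (F : Type) [Field F] [Fintype F] [Algebra (ZMod p) F] (hF : Fintype.card F = p ^ n) (hcase : d' = 2 * d)
    (α β : F) (hα : α ^ p ^ m = α) (hne : ¬(α = 0 ∧ β = 0)) :
    (Nat.card {xy : F × F // (2 : F)⁻¹ * α * xy.1 ^ (p ^ m + 1) + β * xy.1 ^ (p ^ k + 1)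
        = xy.2 ^ p ^ d - xy.2} : ℂ)
      = (p : ℂ) ^ n + ((p : ℂ) ^ d - 1) * Tsum p m n k F α β :=
  stmt6_general p m k n d d' hp hodd hn hd hd' F hF hcase α β hα
end
end
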